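/- Let k ≥ 1 and for each i ∈ ℤ/k let c_i be a finitely supported ℚ-valued function on pairs of partitions. Then the vacuum expectation value of the abnormally ordered product ⟨; ∏_{i∈ℤ/k} (∑_{(μ⁺,μ⁻)} c_i(μ⁺,μ⁻)·β_{i,μ⁺}·β_{i−1,−μ⁻}) ;⟩ equals ∑_{(ν_0,…,ν_{k−1})} ∏_{i∈ℤ/k} c_i(ν_i, ν_{i−1})·z_{ν_i}, where the sum is over all k-tuples of partitions. -/

import Mathlib

open MvPolynomial

/-! ## The free boson system with `k` colors -/

/-- `Λ_k`, the polynomial ring over `ℚ` in the variables `p_{i,n}`, `i ∈ ℤ/k`, `n ≥ 1`. -/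
abbrev LambdaK (k : ℕ) : Type := MvPolynomial (ZMod k × ℕ+) ℚ

/-- The bosonic operators: `β_{i,n} f = p_{i,−n}·f` for `n < 0`, `β_{i,0} = 0`,
`β_{i,n} f = n·∂f/∂p_{i,n}` for `n > 0`. -/
noncomputable def bbeta {k : ℕ} (i : ZMod k) (n : ℤ) : Module.End ℚ (LambdaK k) :=
  if h : n < 0 then
    LinearMap.mulLeft ℚ (X (i, (⟨n.natAbs, Int.natAbs_pos.mpr (by omega)⟩ : ℕ+)))
  else if h' : 0 < n then
    (n : ℚ) • (pderiv (i, (⟨n.natAbs, Int.natAbs_pos.mpr (by omega)⟩ : ℕ+))).toLinearMap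
  else 0

lemma pderiv_pderiv_comm {σ : Type*} (i j : σ) (p : MvPolynomial σ ℚ) :
    pderiv i (pderiv j p) = pderiv j (pderiv i p) := by
  classical
  induction p using MvPolynomial.induction_on with
  | C a => simp
  | add p q hp hq => simp [hp, hq]
  | mul_X p s ih =>
    simp only [pderiv_mul, map_add, ih, pderiv_X, Pi.single_apply]
    split_ifs <;> simp <;> ring

lemma bbeta_zero {k : ℕ} (i : ZMod k) : bbeta i 0 = 0 := by simp [bbeta]

lemma bbeta_of_pos {k : ℕ} (i : ZMod k) {n : ℤ} (h : 0 < n) :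
    bbeta i n =
      ((n : ℚ) • (pderiv (i, (⟨n.natAbs, Int.natAbs_pos.mpr (by omega)⟩ : ℕ+))).toLinearMap :
        Module.End ℚ (LambdaK k)) := by
  rw [bbeta, dif_neg (by omega), dif_pos h]

lemma bbeta_of_neg {k : ℕ} (i : ZMod k) {n : ℤ} (h : n < 0) :
    bbeta i n =
      LinearMap.mulLeft ℚ (X (i, (⟨n.natAbs, Int.natAbs_pos.mpr (by omega)⟩ : ℕ+)) : LambdaK k) := by
  rw [bbeta, dif_pos h]

/-- Operators `β_{i,m}`, `β_{j,n}` with `m, n ≥ 0` commute. -/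
lemma bbeta_nonneg_commute {k : ℕ} {i j : ZMod k} {m n : ℤ} (hm : 0 ≤ m) (hn : 0 ≤ n) :
    Commute (bbeta i m) (bbeta j n) := by
  rcases hm.eq_or_lt with rfl | h1
  · rw [bbeta_zero]; exact Commute.zero_left _
  rcases hn.eq_or_lt with rfl | h2
  · rw [bbeta_zero]; exact Commute.zero_right _
  rw [bbeta_of_pos i h1, bbeta_of_pos j h2]
  have key : ∀ (σ : Type) (a b : σ) (r s : ℚ), Commute
      (r • (pderiv a).toLinearMap : Module.End ℚ (MvPolynomial σ ℚ)) (s • (pderiv b).toLinearMap) := by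
    intro σ a b r s
    refine (Commute.smul_left ?_ _).smul_right _
    refine LinearMap.ext fun p => ?_
    exact pderiv_pderiv_comm _ _ p
  exact key _ _ _ _ _

/-- Operators `β_{i,m}`, `β_{j,n}` with `m, n ≤ 0` commute. -/
lemma bbeta_nonpos_commute {k : ℕ} {i j : ZMod k} {m n : ℤ} (hm : m ≤ 0) (hn : n ≤ 0) :
    Commute (bbeta i m) (bbeta j n) := by
  rcases hm.lt_or_eq with h1 | rfl
  swap
  · rw [bbeta_zero]; exact Commute.zero_left _
  rcases hn.lt_or_eq with h2 | rfl
  swap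
  · rw [bbeta_zero]; exact Commute.zero_right _
  rw [bbeta_of_neg i h1, bbeta_of_neg j h2]
  refine LinearMap.ext fun p => ?_
  simp only [Module.End.mul_apply, LinearMap.mulLeft_apply]
  ring

/-- For a partition `μ` (the multiset of its parts),
`β_{i,μ} = β_{i,μ_1} ∘ ⋯ ∘ β_{i,μ_l}` (positive-index operators commute, so the
order of composition is immaterial). -/
noncomputable def betaP {k : ℕ} (i : ZMod k) (μ : Multiset ℕ+) : Module.End ℚ (LambdaK k) :=
  (μ.map fun a : ℕ+ => bbeta i ((a : ℕ) : ℤ)).noncommProd (by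
    intro x hx y hy _
    obtain ⟨a, _, rfl⟩ := Multiset.mem_map.mp hx
    obtain ⟨b, _, rfl⟩ := Multiset.mem_map.mp hy
    exact bbeta_nonneg_commute (Int.natCast_nonneg _) (Int.natCast_nonneg _))

/-- For a partition `μ` (the multiset of its parts),
`β_{i,−μ} = β_{i,−μ_1} ∘ ⋯ ∘ β_{i,−μ_l}`. -/
noncomputable def betaN {k : ℕ} (i : ZMod k) (μ : Multiset ℕ+) : Module.End ℚ (LambdaK k) :=
  (μ.map fun a : ℕ+ => bbeta i (-((a : ℕ) : ℤ))).noncommProd (by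
    intro x hx y hy _
    obtain ⟨a, _, rfl⟩ := Multiset.mem_map.mp hx
    obtain ⟨b, _, rfl⟩ := Multiset.mem_map.mp hy
    exact bbeta_nonpos_commute (by simp) (by simp))

/-- Any two of the operators `β_{i,μ}` (with positive indices) commute. -/
lemma commute_betaP {k : ℕ} (i j : ZMod k) (μ ν : Multiset ℕ+) :
    Commute (betaP i μ) (betaP j ν) := by
  refine Multiset.noncommProd_commute _ _ _ fun x hx => ?_
  obtain ⟨b, _, rfl⟩ := Multiset.mem_map.mp hx
  refine (Multiset.noncommProd_commute _ _ _ fun y hy => ?_).symm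
  obtain ⟨a, _, rfl⟩ := Multiset.mem_map.mp hy
  exact bbeta_nonneg_commute (Int.natCast_nonneg _) (Int.natCast_nonneg _)

/-- Any two of the operators `β_{i,−μ}` (with negative indices) commute. -/
lemma commute_betaN {k : ℕ} (i j : ZMod k) (μ ν : Multiset ℕ+) :
    Commute (betaN i μ) (betaN j ν) := by
  refine Multiset.noncommProd_commute _ _ _ fun x hx => ?_
  obtain ⟨b, _, rfl⟩ := Multiset.mem_map.mp hx
  refine (Multiset.noncommProd_commute _ _ _ fun y hy => ?_).symm
  obtain ⟨a, _, rfl⟩ := Multiset.mem_map.mp hy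
  exact bbeta_nonpos_commute (by simp) (by simp)

/-- The vacuum expectation value `⟨A⟩`: the coefficient of the constant monomial
in `A(1) ∈ Λ_k`. -/
noncomputable def vevK {k : ℕ} (A : Module.End ℚ (LambdaK k)) : ℚ := constantCoeff (A 1)

/-- For a partition `μ`, `z_μ = ∏_k k^{m_k}·m_k!`. -/
noncomputable def zPart (μ : Multiset ℕ+) : ℚ :=
  ∏ a ∈ μ.toFinset, (((a : ℕ) : ℚ) ^ μ.count a * (μ.count a).factorial)

/-- `|μ| = ∑ μ_i`, the size of a partition. -/
def pSize (μ : Multiset ℕ+) : ℕ := (μ.map fun a : ℕ+ => (a : ℕ)).sum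

/-- Given a choice `φ` of a pair of partitions for each color `i`, the product
`∏_{i ∈ ℤ/k} β_{i,φ(i)⁺}` of the positive-index operators. -/
noncomputable def prodBetaP {k : ℕ} [NeZero k]
    (φ : ZMod k → Multiset ℕ+ × Multiset ℕ+) : Module.End ℚ (LambdaK k) :=
  Finset.univ.noncommProd (fun i => betaP i (φ i).1)
    (fun x _ y _ _ => commute_betaP x y (φ x).1 (φ y).1)

/-- Given a choice `φ` of a pair of partitions for each color `i`, the product
`∏_{i ∈ ℤ/k} β_{i−1,−φ(i)⁻}` of the negative-index operators. -/
noncomputable def prodBetaN {k : ℕ} [NeZero k]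
    (φ : ZMod k → Multiset ℕ+ × Multiset ℕ+) : Module.End ℚ (LambdaK k) :=
  Finset.univ.noncommProd (fun i => betaN (i - 1) (φ i).2)
    (fun x _ y _ _ => commute_betaN (x - 1) (y - 1) (φ x).2 (φ y).2)

/-!
On monomials, `β_{i,−μ}` multiplies by `∏_{a ∈ μ} p_{i,a}`, while `β_{i,μ}` sends `p^d` to
`∏_a a^{m_a} (d_{i,a})_{m_a} · p^{d − e_{i,μ}}` (falling factorials, `m_a` the multiplicity of `a`
in `μ`), so it kills `p^d` unless `d_{i,a} ≥ m_a` for all `a`. Since colour `i` of the negative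
half of `φ` is `φ(i+1)⁻`, the vacuum expectation of a single term is therefore
`∏_i δ(φ(i+1)⁻, φ(i)⁺) z_{φ(i)⁺}`. The surviving `φ` are exactly `φ(i) = (ν_i, ν_{i−1})`, and
reindexing the sum by `ν` gives the right-hand side.
-/

lemma Finsupp.prod_add_single_eq_mul {α N : Type*} [DecidableEq α] [CommMonoid N]
    (f : α →₀ ℕ) (a : α) (g : α → ℕ → N) (hg : ∀ x, g x 0 = 1) {c : N}
    (hc : g a (f a + 1) = c * g a (f a)) :
    (Finsupp.single a 1 + f).prod g = c * f.prod g := by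
  rw [← Finsupp.mul_prod_erase' _ a g hg, ← Finsupp.mul_prod_erase' f a g hg, Finsupp.erase_add,
    Finsupp.erase_single, zero_add, Finsupp.add_apply, Finsupp.single_eq_same, add_comm, hc,
    mul_assoc]

lemma finsum_eq_finsum_comp_of_support_subset_range {α β M : Type*} [AddCommMonoid M]
    {f : α → M} {e : β → α} (he : Function.Injective e) (hf : Function.support f ⊆ Set.range e) :
    ∑ᶠ a, f a = ∑ᶠ b, f (e b) := by
  rw [← finsum_mem_range he, ← finsum_mem_univ]
  exact finsum_mem_inter_support_eq' f _ _ fun a ha => by simp [hf ha]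

section Color

variable {k : ℕ}

lemma bbeta_pnat (i : ZMod k) (a : ℕ+) :
    bbeta i ((a : ℕ) : ℤ) = ((a : ℕ) : ℚ) • (pderiv (i, a)).toLinearMap := by
  rw [bbeta_of_pos i (by exact_mod_cast a.pos)]
  rfl

lemma bbeta_neg_pnat (i : ZMod k) (a : ℕ+) :
    bbeta i (-((a : ℕ) : ℤ)) = LinearMap.mulLeft ℚ (X (i, a)) := by
  rw [bbeta_of_neg i (by simp)]
  simp only [Int.natAbs_neg, Int.natAbs_natCast]
  rfl

lemma betaP_zero (i : ZMod k) : betaP i 0 = 1 :=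
  Multiset.noncommProd_empty _

lemma betaP_cons (i : ZMod k) (a : ℕ+) (μ : Multiset ℕ+) :
    betaP i (a ::ₘ μ) = bbeta i ((a : ℕ) : ℤ) * betaP i μ := by
  simp only [betaP, Multiset.map_cons, Multiset.noncommProd_cons]

lemma betaN_zero (i : ZMod k) : betaN i 0 = 1 :=
  Multiset.noncommProd_empty _

lemma betaN_cons (i : ZMod k) (a : ℕ+) (μ : Multiset ℕ+) :
    betaN i (a ::ₘ μ) = bbeta i (-((a : ℕ) : ℤ)) * betaN i μ := by
  simp only [betaN, Multiset.map_cons, Multiset.noncommProd_cons]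

/-- The exponent of the monomial `∏_{a ∈ μ} p_{i,a}`. -/
noncomputable def colorExp (i : ZMod k) (μ : Multiset ℕ+) : ZMod k × ℕ+ →₀ ℕ :=
  Multiset.toFinsupp (μ.map (Prod.mk i))

lemma colorExp_apply (i j : ZMod k) (μ : Multiset ℕ+) (b : ℕ+) :
    colorExp i μ (j, b) = if i = j then μ.count b else 0 := by
  rw [colorExp, Multiset.toFinsupp_apply]
  split_ifs with h
  · subst h
    exact Multiset.count_map_eq_count' _ _ (Prod.mk_right_injective i) b
  · exact Multiset.count_eq_zero.mpr fun hb => by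
      obtain ⟨_, _, he⟩ := Multiset.mem_map.mp hb
      exact h (congrArg Prod.fst he)

lemma colorExp_cons (i : ZMod k) (a : ℕ+) (μ : Multiset ℕ+) :
    colorExp i (a ::ₘ μ) = Finsupp.single (i, a) 1 + colorExp i μ := by
  rw [colorExp, Multiset.map_cons, ← Multiset.singleton_add, Multiset.toFinsupp_add,
    Multiset.toFinsupp_singleton, colorExp]

lemma sum_colorExp_apply (s : Finset (ZMod k)) (μ : ZMod k → Multiset ℕ+) (i : ZMod k) (b : ℕ+) :
    (∑ j ∈ s, colorExp j (μ j)) (i, b) = if i ∈ s then (μ i).count b else 0 := by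
  simp only [Finsupp.finsetSum_apply, colorExp_apply, Finset.sum_ite_eq']

lemma betaN_eq_mulLeft (i : ZMod k) (μ : Multiset ℕ+) :
    betaN i μ = LinearMap.mulLeft ℚ (monomial (colorExp i μ) 1) := by
  induction μ using Multiset.induction with
  | empty => rw [betaN_zero, colorExp, Multiset.map_zero, Multiset.toFinsupp_zero, monomial_zero',
      C_1, LinearMap.mulLeft_one]; rfl
  | cons a μ ih =>
    rw [betaN_cons, ih, bbeta_neg_pnat, colorExp_cons, monomial_single_add, pow_one,
      LinearMap.mulLeft_mul]
    rfl

noncomputable def betaPCoeff (i : ZMod k) (μ : Multiset ℕ+) (d : ZMod k × ℕ+ →₀ ℕ) : ℚ :=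
  (Multiset.toFinsupp μ).prod fun a n => ((a : ℕ) : ℚ) ^ n * ((d (i, a)).descFactorial n : ℚ)

lemma betaPCoeff_cons (i : ZMod k) (a : ℕ+) (μ : Multiset ℕ+) (d : ZMod k × ℕ+ →₀ ℕ) :
    betaPCoeff i (a ::ₘ μ) d =
      ((a : ℕ) : ℚ) * ((d (i, a) - μ.count a : ℕ) : ℚ) * betaPCoeff i μ d := by
  rw [betaPCoeff, ← Multiset.singleton_add, Multiset.toFinsupp_add, Multiset.toFinsupp_singleton]
  refine Finsupp.prod_add_single_eq_mul _ _ _ (fun _ => by simp) ?_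
  rw [Multiset.toFinsupp_apply, Nat.descFactorial_succ]
  push_cast
  ring

lemma betaPCoeff_congr (i : ZMod k) (μ : Multiset ℕ+) {d d' : ZMod k × ℕ+ →₀ ℕ}
    (h : ∀ a, d (i, a) = d' (i, a)) : betaPCoeff i μ d = betaPCoeff i μ d' := by
  simp only [betaPCoeff, h]

lemma betaPCoeff_of_count (i : ZMod k) (μ : Multiset ℕ+) {d : ZMod k × ℕ+ →₀ ℕ}
    (h : ∀ a, d (i, a) = μ.count a) : betaPCoeff i μ d = zPart μ := by
  refine Finset.prod_congr rfl fun a _ => ?_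
  simp only [h, Multiset.toFinsupp_apply, Nat.descFactorial_self]

lemma betaPCoeff_eq_zero_of_lt (i : ZMod k) (μ : Multiset ℕ+) {d : ZMod k × ℕ+ →₀ ℕ} {b : ℕ+}
    (h : d (i, b) < μ.count b) : betaPCoeff i μ d = 0 := by
  refine Finset.prod_eq_zero (i := b) (Multiset.toFinsupp_support μ ▸ ?_) ?_
  · exact Multiset.mem_toFinset.mpr (Multiset.count_pos.mp (by omega))
  · simp only [Multiset.toFinsupp_apply, Nat.descFactorial_eq_zero_iff_lt.mpr h, Nat.cast_zero,
      mul_zero]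

lemma betaP_monomial (i : ZMod k) (μ : Multiset ℕ+) (d : ZMod k × ℕ+ →₀ ℕ) (r : ℚ) :
    betaP i μ (monomial d r) = monomial (d - colorExp i μ) (betaPCoeff i μ d * r) := by
  induction μ using Multiset.induction with
  | empty => simp [betaP_zero, colorExp, betaPCoeff]
  | cons a μ ih =>
    rw [betaP_cons, Module.End.mul_apply, ih, bbeta_pnat, LinearMap.smul_apply,
      Derivation.coeFn_coe, pderiv_monomial, smul_monomial, Finsupp.tsub_apply, colorExp_apply,
      if_pos rfl, colorExp_cons, add_comm (Finsupp.single _ _), ← tsub_tsub, betaPCoeff_cons,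
      smul_eq_mul]
    congr 1
    ring

end Color

section Vacuum

variable {k : ℕ}

lemma noncommProd_betaP_monomial (s : Finset (ZMod k)) (μ : ZMod k → Multiset ℕ+) (comm)
    (d : ZMod k × ℕ+ →₀ ℕ) (r : ℚ) :
    s.noncommProd (fun i => betaP i (μ i)) comm (monomial d r) =
      monomial (d - ∑ i ∈ s, colorExp i (μ i)) ((∏ i ∈ s, betaPCoeff i (μ i) d) * r) := by
  induction s using Finset.induction_on with
  | empty => simp
  | @insert a s ha ih =>
    have hcoeff : betaPCoeff a (μ a) (d - ∑ i ∈ s, colorExp i (μ i)) = betaPCoeff a (μ a) d :=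
      betaPCoeff_congr a (μ a) fun b => by
        rw [Finsupp.tsub_apply, sum_colorExp_apply, if_neg ha, Nat.sub_zero]
    rw [Finset.noncommProd_insert_of_notMem _ _ _ _ ha, Module.End.mul_apply, ih,
      betaP_monomial, hcoeff, Finset.sum_insert ha, Finset.prod_insert ha, tsub_tsub, add_comm,
      mul_assoc]

variable [NeZero k]

lemma prodBetaP_monomial (φ : ZMod k → Multiset ℕ+ × Multiset ℕ+) (d : ZMod k × ℕ+ →₀ ℕ) (r : ℚ) :
    prodBetaP φ (monomial d r) =
      monomial (d - ∑ i, colorExp i (φ i).1) ((∏ i, betaPCoeff i (φ i).1 d) * r) :=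
  noncommProd_betaP_monomial _ _ _ d r

lemma prodBetaN_eq_mulLeft (φ : ZMod k → Multiset ℕ+ × Multiset ℕ+) :
    prodBetaN φ = LinearMap.mulLeft ℚ (monomial (∑ i, colorExp (i - 1) (φ i).2) 1) := by
  refine (Finset.noncommProd_congr rfl (fun i _ => betaN_eq_mulLeft (i - 1) (φ i).2) _).trans ?_
  change _ = Algebra.lmul ℚ (LambdaK k) _
  rw [monomial_sum_one, ← Finset.noncommProd_eq_prod]
  exact (Finset.map_noncommProd _ _ _ (Algebra.lmul ℚ (LambdaK k))).symm

lemma constantCoeff_monomial_sub_sum_colorExp (μ ν : ZMod k → Multiset ℕ+) :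
    constantCoeff (monomial (∑ i, colorExp i (ν i) - ∑ i, colorExp i (μ i))
        (∏ i, betaPCoeff i (μ i) (∑ j, colorExp j (ν j)))) =
      ∏ i, if ν i = μ i then zPart (μ i) else 0 := by
  have hcount : ∀ (ρ : ZMod k → Multiset ℕ+) i b, (∑ j, colorExp j (ρ j)) (i, b) = (ρ i).count b :=
    fun ρ i b => by rw [sum_colorExp_apply, if_pos (Finset.mem_univ i)]
  rw [constantCoeff_monomial]
  by_cases hνμ : ∀ i, ν i = μ i
  · obtain rfl : ν = μ := funext hνμ
    simp only [tsub_self, if_true]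
    exact Finset.prod_congr rfl fun i _ => betaPCoeff_of_count i (ν i) (hcount ν i)
  · obtain ⟨i, hi⟩ := not_forall.mp hνμ
    rw [Finset.prod_eq_zero (f := fun i => if ν i = μ i then zPart (μ i) else 0)
      (Finset.mem_univ i) (if_neg hi)]
    split_ifs with hexp
    · have hle : ν i ≤ μ i := Multiset.le_iff_count.mpr fun b => by
        simpa [hcount] using Finsupp.le_def.mp (tsub_eq_zero_iff_le.mp hexp) (i, b)
      obtain ⟨b, hb⟩ : ∃ b, (ν i).count b < (μ i).count b := by
        by_contra! h
        exact hi (le_antisymm hle (Multiset.le_iff_count.mpr h))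
      exact Finset.prod_eq_zero (Finset.mem_univ i)
        (betaPCoeff_eq_zero_of_lt i (μ i) (by rwa [hcount]))
    · rfl

lemma vevK_prodBetaP_mul_prodBetaN (φ : ZMod k → Multiset ℕ+ × Multiset ℕ+) :
    vevK (prodBetaP φ * prodBetaN φ) =
      ∏ i, if (φ (i + 1)).2 = (φ i).1 then zPart (φ i).1 else 0 := by
  have hshift : ∑ i, colorExp (i - 1) (φ i).2 = ∑ j, colorExp j (φ (j + 1)).2 :=
    (Fintype.sum_equiv (Equiv.addRight 1) _ _ fun j => by simp).symm
  rw [vevK, Module.End.mul_apply, prodBetaN_eq_mulLeft, LinearMap.mulLeft_apply, mul_one,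
    prodBetaP_monomial, mul_one, hshift]
  exact constantCoeff_monomial_sub_sum_colorExp (fun i => (φ i).1) (fun j => (φ (j + 1)).2)

end Vacuum

theorem vev_abnormal_prod_sum_general (k : ℕ) [NeZero k]
    (c : ZMod k → Multiset ℕ+ × Multiset ℕ+ → ℚ) :
    ∑ᶠ φ : ZMod k → Multiset ℕ+ × Multiset ℕ+,
        (∏ i : ZMod k, c i (φ i)) * vevK (prodBetaP φ * prodBetaN φ) =
      ∑ᶠ ν : ZMod k → Multiset ℕ+,
        ∏ i : ZMod k, (c i (ν i, ν (i - 1)) * zPart (ν i)) := by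
  let e : (ZMod k → Multiset ℕ+) → ZMod k → Multiset ℕ+ × Multiset ℕ+ := fun ν i => (ν i, ν (i - 1))
  have he : Function.Injective e := fun ν ν' h => funext fun i => congrArg (fun φ => (φ i).1) h
  have hsupp : Function.support
      (fun φ => (∏ i, c i (φ i)) * vevK (prodBetaP φ * prodBetaN φ)) ⊆ Set.range e := by
    intro φ hφ
    rw [Function.mem_support, vevK_prodBetaP_mul_prodBetaN] at hφ
    have hmatch : ∀ i, (φ (i + 1)).2 = (φ i).1 := fun i => by
      by_contra h
      exact hφ (mul_eq_zero_of_right _ (Finset.prod_eq_zero (Finset.mem_univ i) (if_neg h)))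
    exact ⟨fun i => (φ i).1, funext fun i => Prod.ext rfl (by simpa using (hmatch (i - 1)).symm)⟩
  rw [finsum_eq_finsum_comp_of_support_subset_range he hsupp]
  refine finsum_congr fun ν => ?_
  simp [e, vevK_prodBetaP_mul_prodBetaN, ← Finset.prod_mul_distrib]

/-- For finitely supported coefficients `c_i` on pairs of partitions,
`⟨; ∏_{i∈ℤ/k} (∑_{(μ⁺,μ⁻)} c_i(μ⁺,μ⁻) β_{i,μ⁺} β_{i−1,−μ⁻}) ;⟩
  = ∑_{(ν_0,…,ν_{k−1})} ∏_{i∈ℤ/k} c_i(ν_i, ν_{i−1})·z_{ν_i}`,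
the sum on the right being over all `k`-tuples of partitions.  (On the left the
abnormally ordered product is expanded multilinearly: it is the sum over all choices
`φ` of one pair of partitions for each color of the corresponding coefficient times
the vev of the abnormally ordered product of the chosen operators.) -/
theorem vev_abnormal_prod_sum (k : ℕ) [NeZero k]
    (c : ZMod k → Multiset ℕ+ × Multiset ℕ+ → ℚ)
    (hfin : ∀ i, (Function.support (c i)).Finite) :
    ∑ᶠ φ : ZMod k → Multiset ℕ+ × Multiset ℕ+,
        (∏ i : ZMod k, c i (φ i)) * vevK (prodBetaP φ * prodBetaN φ) =
      ∑ᶠ ν : ZMod k → Multiset ℕ+,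
        ∏ i : ZMod k, (c i (ν i, ν (i - 1)) * zPart (ν i)) :=
  vev_abnormal_prod_sum_general k c
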